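/- arXiv:2005.08602 — 4 statements merged into one kernel-verified Lean document; each statement's English description precedes it below -/
import Mathlib

section
/- Under the finite-atom assumption on L_#μ, the integral of L̃ with respect to the pushforward measure Φ_#μ equals its Lebesgue integral: ∫_{[0,1]} L̃(t) d(Φ_#μ)(t) = ∫_0^1 L̃(t) dt. -/
open MeasureTheory Set

/-- The survival function `X(l) = mu {z : L z > l}` (as a real number). -/
noncomputable def survival {α : Type*} [MeasurableSpace α] (μ : Measure α) (L : α → ℝ)
    (lam : ℝ) : ℝ :=
  (μ {z | lam < L z}).toReal

/-- The generalized inverse `Ltilde (ξ) = sup {l ∈ range L : X l > ξ}`. -/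
noncomputable def genInv {α : Type*} [MeasurableSpace α] (μ : Measure α) (L : α → ℝ)
    (ξ : ℝ) : ℝ :=
  sSup {lam : ℝ | lam ∈ Set.range L ∧ ξ < survival μ L lam}

/-- The plateau mass `Δ(r) = μ {z : L z = r}` (as a real number). -/
noncomputable def plateau {α : Type*} [MeasurableSpace α] (μ : Measure α) (L : α → ℝ)
    (t : ℝ) : ℝ :=
  (μ {z | L z = t}).toReal

/-- The non-strict survival function `ψ(r) = μ {z : L z ≥ r}` (as a real number). -/
noncomputable def psi {α : Type*} [MeasurableSpace α] (μ : Measure α) (L : α → ℝ)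
    (t : ℝ) : ℝ :=
  (μ {z | t ≤ L z}).toReal


section AuxLemmas

variable {α : Type*} [MeasurableSpace α] (μ : Measure α) (L : α → ℝ)

lemma survival_antitone [IsFiniteMeasure μ] : Antitone (survival μ L) := by
  intro s t hst
  exact ENNReal.toReal_mono (measure_ne_top _ _)
    (measure_mono fun z hz => lt_of_le_of_lt hst hz)

lemma survival_nonneg (l : ℝ) : 0 ≤ survival μ L l := ENNReal.toReal_nonneg

lemma survival_le_one [IsProbabilityMeasure μ] (l : ℝ) : survival μ L l ≤ 1 := by
  have h := prob_le_one (μ := μ) (s := {z | l < L z})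
  calc survival μ L l ≤ (1 : ENNReal).toReal := ENNReal.toReal_mono (by simp) h
    _ = 1 := by simp

lemma psi_nonneg (t : ℝ) : 0 ≤ psi μ L t := ENNReal.toReal_nonneg

lemma psi_le_one [IsProbabilityMeasure μ] (t : ℝ) : psi μ L t ≤ 1 := by
  have h := prob_le_one (μ := μ) (s := {z | t ≤ L z})
  calc psi μ L t ≤ (1 : ENNReal).toReal := ENNReal.toReal_mono (by simp) h
    _ = 1 := by simp

lemma survival_le_psi [IsFiniteMeasure μ] (t : ℝ) : survival μ L t ≤ psi μ L t :=
  ENNReal.toReal_mono (measure_ne_top _ _) (measure_mono fun z hz => le_of_lt (show t < L z from hz))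

lemma psi_antitone [IsFiniteMeasure μ] : Antitone (psi μ L) := by
  intro s t hst
  exact ENNReal.toReal_mono (measure_ne_top _ _)
    (measure_mono fun z hz => le_trans hst hz)

lemma psi_le_survival_of_lt [IsFiniteMeasure μ] {l t : ℝ} (h : l < t) :
    psi μ L t ≤ survival μ L l :=
  ENNReal.toReal_mono (measure_ne_top _ _)
    (measure_mono fun _ hz => lt_of_lt_of_le h hz)

lemma psi_eq_add [IsFiniteMeasure μ] (hL : Measurable L) (t : ℝ) :
    psi μ L t = survival μ L t + plateau μ L t := by
  have hset : {z | t ≤ L z} = {z | t < L z} ∪ {z | L z = t} := by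
    ext z
    simp only [mem_setOf_eq, mem_union]
    constructor
    · intro h
      rcases lt_or_eq_of_le h with h' | h'
      · exact Or.inl h'
      · exact Or.inr h'.symm
    · rintro (h | h)
      · exact le_of_lt h
      · exact le_of_eq h.symm
  have hdisj : Disjoint {z | t < L z} {z | L z = t} := by
    rw [Set.disjoint_left]
    intro z hz1 hz2
    exact absurd hz2 (ne_of_gt hz1)
  unfold psi survival plateau
  rw [hset, measure_union hdisj (hL (measurableSet_singleton t))]
  exact ENNReal.toReal_add (measure_ne_top _ _) (measure_ne_top _ _)

end AuxLemmas


/-- Under the finite-atom assumption on the pushforward of μ under L,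
the integral of the generalized inverse with respect to the pushforward measure
`Φ_#μ` (where `Φ x = X (L x)`) equals its Lebesgue integral over [0,1]. -/
theorem integral_genInv_pushforward_eq
    {d : ℕ} (Ω : Set (Fin d → ℝ)) (μ : Measure Ω) [IsProbabilityMeasure μ]
    (L : Ω → ℝ) (hL : Measurable L)
    (hbd : ∃ a b : ℝ, ∀ x, a ≤ L x ∧ L x ≤ b)
    (N : ℕ) (r : Fin N → ℝ) (hr : StrictMono r)
    (hatom : ∀ i : Fin N, 0 < μ {z | L z = r i})
    (hnonatom : ∀ s : ℝ, s ∉ Set.range r → μ {z | L z = s} = 0) :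
    ∫ t, genInv μ L t ∂(Measure.map (fun x => survival μ L (L x)) μ)
      = ∫ t in Set.Icc (0:ℝ) 1, genInv μ L t := by
  obtain ⟨a, b, hab⟩ := hbd
  have hXmeas : Measurable (survival μ L) := (survival_antitone μ L).measurable
  have hΦmeas : Measurable (fun x => survival μ L (L x)) := hXmeas.comp hL
  have hXb : survival μ L b = 0 := by
    have h : {z | b < L z} = (∅ : Set Ω) := by
      ext z; simp only [mem_setOf_eq, mem_empty_iff_false, iff_false, not_lt]
      exact (hab z).2
    unfold survival; rw [h]; simp
  have hXlow : ∀ l : ℝ, l < a → survival μ L l = 1 := by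
    intro l hl
    have h : {z | l < L z} = (univ : Set Ω) := by
      ext z; simp only [mem_setOf_eq, mem_univ, iff_true]
      exact lt_of_lt_of_le hl (hab z).1
    unfold survival; rw [h, measure_univ]; simp
  have hΔpos : ∀ i, 0 < plateau μ L (r i) := fun i =>
    ENNReal.toReal_pos (hatom i).ne' (measure_ne_top _ _)
  have hαψ : ∀ i, survival μ L (r i) < psi μ L (r i) := by
    intro i
    rw [psi_eq_add μ L hL]
    linarith [hΔpos i]
  set q : ℝ → ℝ := fun t =>
    t - ∑ i : Fin N, if t ∈ Ico (survival μ L (r i)) (psi μ L (r i)) then t - survival μ L (r i) else 0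
    with hq
  have hdisj : ∀ i j : Fin N, ∀ t : ℝ, t ∈ Ico (survival μ L (r i)) (psi μ L (r i)) →
      t ∈ Ico (survival μ L (r j)) (psi μ L (r j)) → i = j := by
    intro i j t hi hj
    by_contra hne
    rcases lt_or_gt_of_ne (hr.injective.ne hne) with h | h
    · have h2 := psi_le_survival_of_lt μ L h
      exact absurd (lt_of_lt_of_le hj.2 (le_trans h2 hi.1)) (lt_irrefl t)
    · have h2 := psi_le_survival_of_lt μ L h
      exact absurd (lt_of_lt_of_le hi.2 (le_trans h2 hj.1)) (lt_irrefl t)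
  have hq_plateau : ∀ (j : Fin N) (t : ℝ), t ∈ Ico (survival μ L (r j)) (psi μ L (r j)) →
      q t = survival μ L (r j) := by
    intro j t ht
    have hsum : ∑ i : Fin N, (if t ∈ Ico (survival μ L (r i)) (psi μ L (r i)) then t - survival μ L (r i) else 0)
        = t - survival μ L (r j) := by
      rw [Finset.sum_eq_single j]
      · rw [if_pos ht]
      · intro i _ hij
        rw [if_neg]
        intro hti
        exact hij (hdisj i j t hti ht)
      · intro hj'; exact absurd (Finset.mem_univ j) hj'
    simp only [hq, hsum]; ring
  have hq_id : ∀ t : ℝ, (∀ i, t ∉ Ico (survival μ L (r i)) (psi μ L (r i))) → q t = t := by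
    intro t ht
    have hsum : ∑ i : Fin N, (if t ∈ Ico (survival μ L (r i)) (psi μ L (r i)) then t - survival μ L (r i) else 0) = 0 :=
      Finset.sum_eq_zero fun i _ => if_neg (ht i)
    simp only [hq, hsum]; ring
  have hq_cases : ∀ t : ℝ, (q t = t) ∨ ∃ j, t ∈ Ico (survival μ L (r j)) (psi μ L (r j)) ∧ q t = survival μ L (r j) := by
    intro t
    by_cases h : ∃ j, t ∈ Ico (survival μ L (r j)) (psi μ L (r j))
    · obtain ⟨j, hj⟩ := h
      exact Or.inr ⟨j, hj, hq_plateau j t hj⟩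
    · push_neg at h
      exact Or.inl (hq_id t h)
  have hq_le : ∀ t : ℝ, q t ≤ t := by
    intro t
    rcases hq_cases t with h | ⟨j, hj, h⟩
    · exact le_of_eq h
    · rw [h]; exact hj.1
  have hq_nonneg : ∀ t : ℝ, 0 ≤ t → 0 ≤ q t := by
    intro t ht
    rcases hq_cases t with h | ⟨j, hj, h⟩
    · rw [h]; exact ht
    · rw [h]; exact survival_nonneg μ L _
  have hq_meas : Measurable q := by
    apply Measurable.sub measurable_id
    apply Finset.measurable_sum
    intro i _
    exact Measurable.ite measurableSet_Ico (measurable_id.sub measurable_const) measurable_const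
  have hf_const : ∀ (j : Fin N) (ξ : ℝ), ξ ∈ Ico (survival μ L (r j)) (psi μ L (r j)) →
      genInv μ L ξ = sSup (Set.range L ∩ Iio (r j)) := by
    intro j ξ hξ
    unfold genInv
    congr 1
    ext l
    simp only [mem_setOf_eq, mem_inter_iff, mem_Iio]
    constructor
    · rintro ⟨hl, hlt⟩
      refine ⟨hl, ?_⟩
      by_contra hge
      push_neg at hge
      have h2 : survival μ L l ≤ survival μ L (r j) := survival_antitone μ L hge
      have := hξ.1
      linarith
    · rintro ⟨hl, hlt⟩
      refine ⟨hl, ?_⟩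
      have h2 := psi_le_survival_of_lt μ L hlt
      have := hξ.2
      linarith
  have hf_meas : Measurable (genInv μ L) := by
    classical
    set g : ℝ → ℝ :=
      fun ξ => sSup (insert (a - 1) {lam : ℝ | lam ∈ Set.range L ∧ ξ < survival μ L lam}) with hg
    have hbdd : ∀ ξ : ℝ,
        BddAbove (insert (a - 1) {lam : ℝ | lam ∈ Set.range L ∧ ξ < survival μ L lam}) := by
      intro ξ
      refine ⟨max b (a - 1), ?_⟩
      rintro l (rfl | ⟨⟨x, rfl⟩, -⟩)
      · exact le_max_right _ _
      · exact le_trans (hab x).2 (le_max_left _ _)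
    have hganti : Antitone g := by
      intro s t hst
      apply csSup_le_csSup (hbdd s) (insert_nonempty _ _)
      apply insert_subset_insert
      intro l hl
      exact ⟨hl.1, lt_of_le_of_lt hst hl.2⟩
    have hfg : genInv μ L = fun ξ => if g ξ < a then 0 else g ξ := by
      funext ξ
      by_cases hne : {lam : ℝ | lam ∈ Set.range L ∧ ξ < survival μ L lam}.Nonempty
      · have hb2 : BddAbove {lam : ℝ | lam ∈ Set.range L ∧ ξ < survival μ L lam} :=
          BddAbove.mono (subset_insert _ _) (hbdd ξ)
        have hge : a ≤ sSup {lam : ℝ | lam ∈ Set.range L ∧ ξ < survival μ L lam} := by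
          obtain ⟨l, hl⟩ := hne
          have hal : a ≤ l := by obtain ⟨x, rfl⟩ := hl.1; exact (hab x).1
          exact le_trans hal (le_csSup hb2 hl)
        have hgs : g ξ = sSup {lam : ℝ | lam ∈ Set.range L ∧ ξ < survival μ L lam} := by
          rw [hg]
          simp only []
          rw [csSup_insert hb2 hne]
          exact sup_eq_right.mpr (by linarith)
        rw [if_neg (by rw [hgs]; exact not_lt.mpr hge)]
        rw [hgs]; rfl
      · have hset : {lam : ℝ | lam ∈ Set.range L ∧ ξ < survival μ L lam} = ∅ :=
          not_nonempty_iff_eq_empty.mp hne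
        have hgv : g ξ = a - 1 := by
          rw [hg]; simp only []; rw [hset]
          simp [csSup_singleton]
        rw [if_pos (by rw [hgv]; linarith)]
        unfold genInv
        rw [hset, Real.sSup_empty]
    rw [hfg]
    exact Measurable.ite (measurableSet_lt hganti.measurable measurable_const)
      measurable_const hganti.measurable
  have hmapeq : Measure.map (fun x => survival μ L (L x)) μ
      = Measure.map q (volume.restrict (Icc (0:ℝ) 1)) := by
    haveI : IsProbabilityMeasure (Measure.map (fun x => survival μ L (L x)) μ) :=
      Measure.isProbabilityMeasure_map hΦmeas.aemeasurable
    refine Measure.ext_of_Iic _ _ (fun y => ?_)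
    rw [Measure.map_apply hΦmeas measurableSet_Iic,
        Measure.map_apply hq_meas measurableSet_Iic,
        Measure.restrict_apply (hq_meas measurableSet_Iic)]
    rcases lt_or_ge y 0 with hy0 | hy0
    · have h1 : (fun x => survival μ L (L x)) ⁻¹' Iic y = ∅ := by
        ext x
        simp only [mem_preimage, mem_Iic, mem_empty_iff_false, iff_false, not_le]
        exact lt_of_lt_of_le hy0 (survival_nonneg μ L _)
      have h2 : q ⁻¹' Iic y ∩ Icc 0 1 = ∅ := by
        rw [eq_empty_iff_forall_notMem]
        rintro t ⟨hqt, hI⟩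
        rw [mem_preimage, mem_Iic] at hqt
        rw [mem_Icc] at hI
        have := hq_nonneg t hI.1
        linarith
      rw [h1, h2]
      simp
    rcases le_or_gt 1 y with hy1 | hy1
    · have h1 : (fun x => survival μ L (L x)) ⁻¹' Iic y = univ := by
        ext x
        simp only [mem_preimage, mem_Iic, mem_univ, iff_true]
        exact le_trans (survival_le_one μ L _) hy1
      have h2 : q ⁻¹' Iic y ∩ Icc 0 1 = Icc 0 1 := by
        apply inter_eq_self_of_subset_right
        intro t ht
        simp only [mem_preimage, mem_Iic]
        exact le_trans (hq_le t) (le_trans ht.2 hy1)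
      rw [h1, h2, measure_univ, Real.volume_Icc]
      norm_num
    · -- main case : 0 ≤ y < 1
      set A : Set ℝ := {l | survival μ L l ≤ y} with hA
      have hAne : A.Nonempty := ⟨b, by simp only [hA, mem_setOf_eq, hXb]; exact hy0⟩
      have hAbdd : BddBelow A := by
        refine ⟨a, fun l hl => ?_⟩
        by_contra hcon
        push_neg at hcon
        have := hXlow l hcon
        simp only [hA, mem_setOf_eq] at hl
        linarith
      set u := sInf A with hu
      have hnotA : ∀ l, l < u → y < survival μ L l := by
        intro l hl
        by_contra hcon
        push_neg at hcon
        exact absurd (csInf_le hAbdd hcon) (not_le.mpr hl)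
      have hXu : survival μ L u ≤ y := by
        have hseq : {z : Ω | u < L z} = ⋃ n : ℕ, {z : Ω | u + 1/(n+1) < L z} := by
          ext z
          simp only [mem_setOf_eq, mem_iUnion]
          constructor
          · intro hz
            obtain ⟨n, hn⟩ := exists_nat_one_div_lt (sub_pos.mpr hz)
            exact ⟨n, by linarith⟩
          · rintro ⟨n, hn⟩
            have hpos : (0:ℝ) < 1/(n+1) := by positivity
            linarith
        have hmono : Monotone (fun n : ℕ => {z : Ω | u + 1/(n+1) < L z}) := by
          intro m n hmn z hz
          simp only [mem_setOf_eq] at hz ⊢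
          have hle : (1:ℝ)/(n+1) ≤ 1/(m+1) := by
            apply one_div_le_one_div_of_le (by positivity)
            have : (m:ℝ) ≤ n := Nat.cast_le.mpr hmn
            linarith
          linarith
        have hle : μ {z : Ω | u < L z} ≤ ENNReal.ofReal y := by
          rw [hseq, hmono.measure_iUnion]
          apply iSup_le
          intro n
          have hpos : (0:ℝ) < 1/(n+1) := by positivity
          obtain ⟨l, hlA, hl⟩ := (csInf_lt_iff hAbdd hAne).mp
            (show sInf A < u + 1/(n+1) by rw [← hu]; linarith)
          calc μ {z : Ω | u + 1/(n+1) < L z} ≤ μ {z : Ω | l < L z} :=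
                measure_mono (fun z hz => lt_trans hl hz)
            _ ≤ ENNReal.ofReal y := by
                rw [← ENNReal.ofReal_toReal (measure_ne_top μ {z : Ω | l < L z})]
                exact ENNReal.ofReal_le_ofReal hlA
        calc survival μ L u = (μ {z : Ω | u < L z}).toReal := rfl
          _ ≤ (ENNReal.ofReal y).toReal := ENNReal.toReal_mono ENNReal.ofReal_ne_top hle
          _ = y := ENNReal.toReal_ofReal hy0
      have hpsiu : y ≤ psi μ L u := by
        have hseq : {z : Ω | u ≤ L z} = ⋂ n : ℕ, {z : Ω | u - 1/(n+1) < L z} := by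
          ext z
          simp only [mem_setOf_eq, mem_iInter]
          constructor
          · intro hz n
            have hpos : (0:ℝ) < 1/(n+1) := by positivity
            linarith
          · intro hz
            by_contra hlt
            push_neg at hlt
            obtain ⟨n, hn⟩ := exists_nat_one_div_lt (sub_pos.mpr hlt)
            have := hz n
            linarith
        have hanti : Antitone (fun n : ℕ => {z : Ω | u - 1/(n+1) < L z}) := by
          intro m n hmn z hz
          simp only [mem_setOf_eq] at hz ⊢
          have hle : (1:ℝ)/(n+1) ≤ 1/(m+1) := by
            apply one_div_le_one_div_of_le (by positivity)
            have : (m:ℝ) ≤ n := Nat.cast_le.mpr hmn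
            linarith
          linarith
        have hiInf : μ {z : Ω | u ≤ L z} = ⨅ n : ℕ, μ {z : Ω | u - 1/(n+1) < L z} := by
          rw [hseq]
          exact hanti.measure_iInter (fun n => (hL measurableSet_Ioi).nullMeasurableSet)
            ⟨0, measure_ne_top _ _⟩
        have hge : ENNReal.ofReal y ≤ μ {z : Ω | u ≤ L z} := by
          rw [hiInf]
          apply le_iInf
          intro n
          have hpos : (0:ℝ) < 1/(n+1) := by positivity
          have h2 := hnotA (u - 1/(n+1)) (by linarith)
          exact ENNReal.ofReal_le_of_le_toReal (le_of_lt h2)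
        calc y = (ENNReal.ofReal y).toReal := (ENNReal.toReal_ofReal hy0).symm
          _ ≤ psi μ L u := ENNReal.toReal_mono (measure_ne_top _ _) hge
      have hsetL : (fun x => survival μ L (L x)) ⁻¹' Iic y = {z : Ω | u ≤ L z} := by
        ext x
        simp only [mem_preimage, mem_Iic, mem_setOf_eq]
        constructor
        · intro h
          exact csInf_le hAbdd h
        · intro h
          exact le_trans (survival_antitone μ L h) hXu
      have hmes : μ {z : Ω | u ≤ L z} = ENNReal.ofReal (psi μ L u) :=
        (ENNReal.ofReal_toReal (measure_ne_top _ _)).symm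
      rcases eq_or_lt_of_le hpsiu with heq | hlt
      · have hsetR : q ⁻¹' Iic y ∩ Icc 0 1 = Icc 0 y := by
          ext t
          simp only [mem_inter_iff, mem_preimage, mem_Iic, mem_Icc]
          constructor
          · rintro ⟨hqt, h0, h1⟩
            refine ⟨h0, ?_⟩
            by_contra hyt
            push_neg at hyt
            rcases hq_cases t with h | ⟨j, hj, h⟩
            · rw [h] at hqt; linarith
            · rw [h] at hqt
              have huj : u ≤ r j := csInf_le hAbdd hqt
              have h2 : psi μ L (r j) ≤ psi μ L u := psi_antitone μ L huj
              have h3 := hj.2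
              rw [← heq] at h2
              linarith
          · rintro ⟨h0, hty⟩
            exact ⟨le_trans (hq_le t) hty, h0, le_trans hty (le_of_lt hy1)⟩
        rw [hsetL, hsetR, Real.volume_Icc, hmes, ← heq]
        norm_num
      · have hmem : u ∈ Set.range r := by
          by_contra hmem
          have h0 := hnonatom u hmem
          have hpe : psi μ L u = survival μ L u := by
            rw [psi_eq_add μ L hL]
            unfold plateau
            rw [h0]
            simp
          linarith
        obtain ⟨i, hi⟩ := hmem
        have hsetR : q ⁻¹' Iic y ∩ Icc 0 1 = Ico 0 (psi μ L u) := by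
          ext t
          simp only [mem_inter_iff, mem_preimage, mem_Iic, mem_Icc, mem_Ico]
          constructor
          · rintro ⟨hqt, h0, h1⟩
            refine ⟨h0, ?_⟩
            rcases hq_cases t with h | ⟨j, hj, h⟩
            · rw [h] at hqt; linarith
            · rw [h] at hqt
              have huj : u ≤ r j := csInf_le hAbdd hqt
              rcases eq_or_lt_of_le huj with hej | hlj
              · have h3 := hj.2
                rw [← hej] at h3
                exact h3
              · have h2 : psi μ L (r j) ≤ survival μ L u := psi_le_survival_of_lt μ L hlj
                have h3 := hj.2
                linarith
          · rintro ⟨h0, htψ⟩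
            refine ⟨?_, h0, le_trans (le_of_lt htψ) (psi_le_one μ L u)⟩
            rcases le_or_gt t y with h | h
            · exact le_trans (hq_le t) h
            · have hti : t ∈ Ico (survival μ L (r i)) (psi μ L (r i)) := by
                rw [hi]
                exact ⟨le_trans hXu (le_of_lt h), htψ⟩
              rw [hq_plateau i t hti, hi]
              exact hXu
        rw [hsetL, hsetR, Real.volume_Ico, hmes]
        norm_num
  haveI : IsProbabilityMeasure (Measure.map (fun x => survival μ L (L x)) μ) :=
    Measure.isProbabilityMeasure_map hΦmeas.aemeasurable
  calc ∫ t, genInv μ L t ∂(Measure.map (fun x => survival μ L (L x)) μ)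
      = ∫ t, genInv μ L t ∂(Measure.map q (volume.restrict (Icc (0:ℝ) 1))) := by rw [hmapeq]
    _ = ∫ t in Icc (0:ℝ) 1, genInv μ L (q t) :=
        integral_map hq_meas.aemeasurable hf_meas.aestronglyMeasurable
    _ = ∫ t in Icc (0:ℝ) 1, genInv μ L t := by
        apply setIntegral_congr_fun measurableSet_Icc
        intro t _
        show genInv μ L (q t) = genInv μ L t
        rcases hq_cases t with h | ⟨j, hj, h⟩
        · rw [h]
        · rw [h, hf_const j _ ⟨le_refl _, hαψ j⟩, hf_const j t hj]
end

section
/- If the likelihood L has a plateau of positive prior measure, i.e. there exists r ∈ ℝ with μ({x ∈ Ω : L(x) = r}) > 0, then the pushforward measure Φ_#μ is NOT the uniform distribution on [0,1] (i.e. Φ_#μ differs from Lebesgue measure restricted to [0,1]). -/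
/-! `Φ = X ∘ L` is constant on the plateau `{L = t}`, so `Φ_#μ` has an atom at `X t`,
whereas Lebesgue measure restricted to `[0, 1]` has none. -/

open MeasureTheory Set

theorem antitone_survival {α : Type*} [MeasurableSpace α] (μ : Measure α) [IsFiniteMeasure μ]
    (L : α → ℝ) : Antitone (survival μ L) := fun _ _ hab =>
  ENNReal.toReal_mono (measure_ne_top μ _) (measure_mono fun _ hz => hab.trans_lt hz)

theorem not_nullSingletonClass_map_of_measure_preimage_singleton_pos {α β : Type*}
    [MeasurableSpace α] [MeasurableSpace β] {μ : Measure α} {f : α → β} (hf : AEMeasurable f μ)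
    {c : β} (hc : 0 < μ (f ⁻¹' {c})) : ¬ NullSingletonClass (μ.map f) := fun _ =>
  hc.ne' (nonpos_iff_eq_zero.mp ((Measure.le_map_apply hf {c}).trans_eq (measure_singleton c)))

theorem pushforward_ne_uniform_of_plateau_general
    {d : ℕ} (Ω : Set (Fin d → ℝ)) (μ : Measure Ω) [IsProbabilityMeasure μ]
    (L : Ω → ℝ) (hL : Measurable L)
    (hplateau : ∃ t : ℝ, 0 < μ {x | L x = t}) :
    Measure.map (fun x => survival μ L (L x)) μ ≠ volume.restrict (Set.Icc (0:ℝ) 1) := by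
  obtain ⟨t, ht⟩ := hplateau
  have hΦ : Measurable fun x => survival μ L (L x) := (antitone_survival μ L).measurable.comp hL
  have hatom : 0 < μ ((fun x => survival μ L (L x)) ⁻¹' {survival μ L t}) :=
    ht.trans_le (measure_mono fun x hx => congrArg (survival μ L) hx)
  intro hunif
  have hhas_atom :=
    not_nullSingletonClass_map_of_measure_preimage_singleton_pos hΦ.aemeasurable hatom
  rw [hunif] at hhas_atom
  exact hhas_atom inferInstance

/-- If the likelihood L has a plateau of positive prior measure, then
the pushforward measure `Φ_#μ` is NOT the uniform distribution on [0,1]. -/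
theorem pushforward_ne_uniform_of_plateau
    {d : ℕ} (Ω : Set (Fin d → ℝ)) (μ : Measure Ω) [IsProbabilityMeasure μ]
    (L : Ω → ℝ) (hL : Measurable L)
    (hbd : ∃ a b : ℝ, ∀ x, a ≤ L x ∧ L x ≤ b)
    (hplateau : ∃ t : ℝ, 0 < μ {x | L x = t}) :
    Measure.map (fun x => survival μ L (L x)) μ ≠ volume.restrict (Set.Icc (0:ℝ) 1) :=
  pushforward_ne_uniform_of_plateau_general Ω μ L hL hplateau
end

section
/- Under the finite-atom assumption on L_#μ, let α ∈ [0,1] and define r_α := inf{r ∈ ℝ : ψ(r) ≤ α}. If α ∈ [α_i, α_i + Δ_i) for some i ∈ {1,…,N}, then r_α = r_i and ψ(r_α) = α_i + Δ_i. -/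
open MeasureTheory Set

/-- Under the finite-atom assumption, for `α ∈ [α_i, α_i + Δ_i)`,
the generalized inverse `r_α = inf {r : ψ(r) ≤ α}` satisfies `r_α = r_i` and
`ψ(r_α) = α_i + Δ_i`. -/
theorem rAlpha_eq_atom_of_mem_Ico
    {d : ℕ} (Ω : Set (Fin d → ℝ)) (μ : Measure Ω) [IsProbabilityMeasure μ]
    (L : Ω → ℝ) (hL : Measurable L)
    (hbd : ∃ a b : ℝ, ∀ x, a ≤ L x ∧ L x ≤ b)
    (N : ℕ) (r : Fin N → ℝ) (hr : StrictMono r)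
    (hatom : ∀ i : Fin N, 0 < μ {z | L z = r i})
    (hnonatom : ∀ s : ℝ, s ∉ Set.range r → μ {z | L z = s} = 0) :
    ∀ α ∈ Set.Icc (0:ℝ) 1, ∀ i : Fin N,
      α ∈ Set.Ico (survival μ L (r i)) (survival μ L (r i) + plateau μ L (r i)) →
        sInf {t : ℝ | psi μ L t ≤ α} = r i ∧
        psi μ L (sInf {t : ℝ | psi μ L t ≤ α})
          = survival μ L (r i) + plateau μ L (r i) := by
  intro α hα i hi
  obtain ⟨h1, h2⟩ := hi
  have hpsi_eq : psi μ L (r i) = survival μ L (r i) + plateau μ L (r i) := by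
    unfold psi survival plateau
    have hset : {z | r i ≤ L z} = {z | r i < L z} ∪ {z | L z = r i} := by
      ext z
      simp only [Set.mem_setOf_eq, Set.mem_union]
      constructor
      · intro h; rcases lt_or_eq_of_le h with h | h
        · exact Or.inl h
        · exact Or.inr h.symm
      · rintro (h | h); exacts [le_of_lt h, le_of_eq h.symm]
    rw [← ENNReal.toReal_add (measure_ne_top μ _) (measure_ne_top μ _), hset, measure_union]
    · rw [Set.disjoint_left]; intro z hz1 hz2; exact absurd hz2 (ne_of_gt hz1)
    · exact hL (measurableSet_singleton _)
  have hS : {t : ℝ | psi μ L t ≤ α} = Set.Ioi (r i) := by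
    ext t
    simp only [Set.mem_setOf_eq, Set.mem_Ioi]
    constructor
    · intro ht
      by_contra hle
      push_neg at hle
      have hmono : psi μ L (r i) ≤ psi μ L t :=
        ENNReal.toReal_mono (measure_ne_top μ _)
          (measure_mono fun z hz => le_trans hle hz)
      rw [hpsi_eq] at hmono
      linarith
    · intro ht
      have hle : psi μ L t ≤ survival μ L (r i) :=
        ENNReal.toReal_mono (measure_ne_top μ _)
          (measure_mono fun z hz => lt_of_lt_of_le ht hz)
      linarith
  rw [hS, csInf_Ioi]
  exact ⟨rfl, hpsi_eq⟩
end

section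
/- Let {(a_p, b_p]}_{p ∈ Π} be a (possibly uncountable) family of nonempty half-open intervals in ℝ (a_p < b_p for all p). Then the union ⋃_{p ∈ Π} (a_p, b_p] can be written as a countable union of pairwise disjoint intervals J_n, where each J_n is either an open interval (c_n, d_n) or a half-open interval (c_n, d_n] with c_n < d_n. -/
open MeasureTheory Set

open Interval in
/-- A nonempty bounded ord-connected subset of `ℝ` in which every point has a smaller point
is `Ioo c d` or `Ioc c d` with `c < d`. -/
lemma classify_left_open {C : Set ℝ} (hC : C.OrdConnected) (hne : C.Nonempty)
    (hbb : BddBelow C) (hba : BddAbove C)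
    (hleft : ∀ y ∈ C, ∃ z ∈ C, z < y) :
    ∃ c d : ℝ, c < d ∧ (C = Set.Ioo c d ∨ C = Set.Ioc c d) := by
  set c := sInf C with hc
  set d := sSup C with hd
  obtain ⟨y₀, hy₀⟩ := hne
  obtain ⟨z₀, hz₀, hz₀y⟩ := hleft y₀ hy₀
  have hcd : c < d :=
    lt_of_le_of_lt (csInf_le hbb hz₀) (lt_of_lt_of_le hz₀y (le_csSup hba hy₀))
  have hcnot : c ∉ C := fun h => by
    obtain ⟨z, hz, hlt⟩ := hleft c h
    exact (csInf_le hbb hz).not_gt hlt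
  have hsub : ∀ y ∈ C, c < y ∧ y ≤ d := fun y hy =>
    ⟨(csInf_le hbb hy).lt_of_ne (fun h => hcnot (by rw [hc, h]; exact hy)), le_csSup hba hy⟩
  by_cases hdC : d ∈ C
  · refine ⟨c, d, hcd, Or.inr ?_⟩
    ext y
    constructor
    · intro hy; exact ⟨(hsub y hy).1, (hsub y hy).2⟩
    · rintro ⟨h1, h2⟩
      obtain ⟨z, hz, hzy⟩ := exists_lt_of_csInf_lt ⟨y₀, hy₀⟩ h1
      exact hC.out hz hdC ⟨hzy.le, h2⟩
  · refine ⟨c, d, hcd, Or.inl ?_⟩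
    ext y
    constructor
    · intro hy
      exact ⟨(hsub y hy).1, (hsub y hy).2.lt_of_ne (fun h => hdC (by rw [← h]; exact hy))⟩
    · rintro ⟨h1, h2⟩
      obtain ⟨z1, hz1, h1'⟩ := exists_lt_of_csInf_lt ⟨y₀, hy₀⟩ h1
      obtain ⟨z2, hz2, h2'⟩ := exists_lt_of_lt_csSup ⟨y₀, hy₀⟩ h2
      exact hC.out hz1 hz2 ⟨h1'.le, h2'.le⟩


/-- A (possibly uncountable) union of nonempty half-open intervals
`(a_p, b_p]` is a countable union of pairwise disjoint intervals, each of which is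
either an open interval `(c, d)` or a half-open interval `(c, d]` with `c < d`. -/
theorem iUnion_Ioc_eq_countable_disjoint_union
    {ι : Type*} (a b : ι → ℝ) (hab : ∀ p, a p < b p) :
    ∃ S : Set (Set ℝ), S.Countable ∧ S.PairwiseDisjoint id ∧
      (⋃ p, Set.Ioc (a p) (b p)) = ⋃₀ S ∧
      ∀ J ∈ S, ∃ c d : ℝ, c < d ∧ (J = Set.Ioo c d ∨ J = Set.Ioc c d) := by
  set U : Set ℝ := ⋃ p, Set.Ioc (a p) (b p) with hU
  set V : ℤ → Set ℝ := fun n => U ∩ Set.Ioc (n : ℝ) (n + 1) with hV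
  -- every point of `V n` has a left interval inside `V n`
  have hkey : ∀ (n : ℤ), ∀ y ∈ V n, ∃ e, e < y ∧ Set.Ioc e y ⊆ V n := by
    intro n y hy
    obtain ⟨hyU, hyI⟩ := hy
    obtain ⟨p, hp⟩ : ∃ p, y ∈ Set.Ioc (a p) (b p) := by
      simpa [hU] using hyU
    refine ⟨max (a p) (n : ℝ), max_lt hp.1 hyI.1, fun w hw => ?_⟩
    have h1 : a p < w := lt_of_le_of_lt (le_max_left _ _) hw.1
    have h2 : (n : ℝ) < w := lt_of_le_of_lt (le_max_right _ _) hw.1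
    exact ⟨Set.mem_iUnion.2 ⟨p, h1, hw.2.trans hp.2⟩, h2, hw.2.trans hyI.2⟩
  -- components absorb a left interval
  have hcomp : ∀ (n : ℤ) (x : ℝ), ∀ y ∈ ordConnectedComponent (V n) x,
      ∃ e, e < y ∧ Set.Ioc e y ⊆ ordConnectedComponent (V n) x := by
    intro n x y hy
    obtain ⟨e, he, hsub⟩ := hkey n y (ordConnectedComponent_subset hy)
    refine ⟨e, he, fun w hw => ?_⟩
    have h1 : uIcc x w ⊆ uIcc x y ∪ uIcc y w := uIcc_subset_uIcc_union_uIcc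
    have h2 : uIcc y w ⊆ V n := by
      rw [uIcc_of_ge hw.2]
      exact fun t ht => hsub ⟨lt_of_lt_of_le hw.1 ht.1, ht.2⟩
    exact h1.trans (union_subset hy h2)
  set S : Set (Set ℝ) :=
    {C | ∃ n : ℤ, ∃ x, x ∈ V n ∧ C = ordConnectedComponent (V n) x} with hS
  have hsubVn : ∀ (n : ℤ) (x : ℝ), ordConnectedComponent (V n) x ⊆ Set.Ioc (n : ℝ) (n + 1) :=
    fun n x => ordConnectedComponent_subset.trans (inter_subset_right)
  -- pairwise disjoint
  have hdisj : S.PairwiseDisjoint id := by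
    rintro C ⟨n, x, hx, rfl⟩ D ⟨m, y, hy, rfl⟩ hne
    rcases eq_or_ne n m with rfl | hnm
    · rw [Function.onFun, id, id]
      rw [Set.disjoint_left]
      intro w hwC hwD
      have e1 := ordConnectedComponent_eq (mem_ordConnectedComponent.1 hwC)
      have e2 := ordConnectedComponent_eq (mem_ordConnectedComponent.1 hwD)
      exact hne (e1.trans e2.symm)
    · refine Disjoint.mono (hsubVn n x) (hsubVn m y) ?_
      rw [Set.Ioc_disjoint_Ioc]
      rcases hnm.lt_or_gt with h | h
      · have : (n : ℝ) + 1 ≤ m := by exact_mod_cast h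
        exact (min_le_left _ _).trans (this.trans (le_max_right _ _))
      · have : (m : ℝ) + 1 ≤ n := by exact_mod_cast h
        exact (min_le_right _ _).trans (this.trans (le_max_left _ _))
  -- countable
  have hcount : S.Countable := by
    refine Set.PairwiseDisjoint.countable_of_nonempty_interior
      (s := id) (hdisj) ?_
    rintro C ⟨n, x, hx, rfl⟩
    have hxC : x ∈ ordConnectedComponent (V n) x := self_mem_ordConnectedComponent.2 hx
    obtain ⟨e, he, hsub⟩ := hcomp n x x hxC
    have h1 : Set.Ioo e x ⊆ interior (ordConnectedComponent (V n) x) :=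
      isOpen_Ioo.subset_interior_iff.2 (Set.Ioo_subset_Ioc_self.trans hsub)
    exact ⟨(e + x) / 2, h1 ⟨by linarith, by linarith⟩⟩
  refine ⟨S, hcount, hdisj, ?_, ?_⟩
  · apply Set.Subset.antisymm
    · intro x hx
      have hn : x ∈ V (⌈x⌉ - 1) := by
        refine ⟨hx, ?_, ?_⟩
        · push_cast
          linarith [Int.ceil_lt_add_one x]
        · push_cast
          linarith [Int.le_ceil x]
      exact ⟨ordConnectedComponent (V (⌈x⌉ - 1)) x, ⟨⌈x⌉ - 1, x, hn, rfl⟩,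
        self_mem_ordConnectedComponent.2 hn⟩
    · rintro x ⟨C, ⟨n, y, hy, rfl⟩, hxC⟩
      exact (ordConnectedComponent_subset.trans inter_subset_left) hxC
  · rintro J ⟨n, x, hx, rfl⟩
    refine classify_left_open inferInstance
      ⟨x, self_mem_ordConnectedComponent.2 hx⟩
      (BddBelow.mono (hsubVn n x) bddBelow_Ioc)
      (BddAbove.mono (hsubVn n x) bddAbove_Ioc) ?_
    intro y hy
    obtain ⟨e, he, hsub⟩ := hcomp n x y hy
    exact ⟨(e + y) / 2, hsub ⟨by linarith, by linarith⟩, by linarith⟩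
end
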